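/- Lemma (summable bound on the biased I_{n,t}): For all integers 0 ≤ t ≤ n, all integers 0 ≤ k ≤ n, and every ζ ∈ ℝ with |ζ| ≤ n, one has |I_{n,t}| ≤ s_t, where s_t := (18|ζ|)^t · (2t+1) · e^{|ζ|} / t!. Moreover, ∑_{t=0}^{∞} s_t < ∞. -/

import Mathlib

open MeasureTheory ProbabilityTheory Filter Real

noncomputable section

/-- The biased `Z_{n,t}(l)`. -/
def ZntB (q n t k : ℕ) (γ β ζ δ c Λn : ℝ) (l : ℤ) : ℂ :=
  (2 : ℂ) ^ ((t : ℤ) - (n : ℤ)) *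
    ∑ τ ∈ Finset.range (n - t + 1),
      (Nat.choose (n - t) τ : ℂ) *
        ((Real.exp (ζ / n) * Real.cos β ^ 2 + Real.exp (-ζ / n) * Real.sin β ^ 2 : ℝ) : ℂ) ^ τ *
        ((Real.exp (-ζ / n) * Real.cos β ^ 2 + Real.exp (ζ / n) * Real.sin β ^ 2 : ℝ) : ℂ) ^
          (n - t - τ) *
        ((1 + (k : ℝ) * Real.sin (2 * δ) / n : ℝ) : ℂ) ^ τ *
        ((1 - (k : ℝ) * Real.sin (2 * δ) / n : ℝ) : ℂ) ^ (n - t - τ) *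
        Complex.exp (Complex.I * (Λn : ℂ) * (γ : ℂ) *
          (((((2 * τ : ℝ) - ((n : ℝ) - t) + l) ^ q - ((2 * τ : ℝ) - ((n : ℝ) - t) - l) ^ q) /
              (n : ℝ) ^ (c * ((q : ℝ) - 1)) : ℝ) : ℂ))

/-- The biased `Ẑ_{n,t}(ξ)`. -/
def ZhatB (q n t k : ℕ) (γ β ζ δ c Λn : ℝ) (ξ : ℤ) : ℂ :=
  ∑ l ∈ Finset.Icc (-(t : ℤ)) (t : ℤ),
    Complex.exp (-(2 * (π : ℂ) * Complex.I * (ξ : ℂ) * (l : ℂ)) / (2 * (t : ℂ) + 1)) *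
      ZntB q n t k γ β ζ δ c Λn l

/-- The biased `E_{n,t}`. -/
def EntB (q n t k : ℕ) (γ β ζ δ c Λn : ℝ) : ℂ :=
  (2 * (t : ℂ) + 1)⁻¹ *
    ∑ ξ ∈ Finset.Icc (-(t : ℤ)) (t : ℤ),
      ((Real.sin (2 * π * ξ / (2 * t + 1)) : ℝ) : ℂ) ^ t * ZhatB q n t k γ β ζ δ c Λn ξ

/-- The biased `I_{n,t}`. -/
def IntB (q n t k : ℕ) (γ β ζ δ c Λn : ℝ) : ℂ :=
  (Nat.choose n t : ℂ) *
    ((Real.exp (-(γ ^ 2 * ((n : ℝ) ^ q - ((n : ℝ) - 2 * t) ^ q) / (n : ℝ) ^ (q - 1))) : ℝ) : ℂ) *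
    ((Real.sinh (ζ / n) * Real.sin (2 * β) *
        (1 - (k : ℝ) / n + (k : ℝ) * Real.cos (2 * δ) / n) : ℝ) : ℂ) ^ t *
    EntB q n t k γ β ζ δ c Λn


/-!
Every factor is bounded in absolute value by the triangle inequality, the phases having modulus
one. In `Z_{n,t}(l)` the weights `e^{±ζ/n} cos²β + e^{∓ζ/n} sin²β` are at most `e^{|ζ|/n}` and
`1 ± k sin(2δ)/n ∈ [0, 2]` sum to `2`, so the binomial theorem bounds the sum by
`2^{n-t} e^{(n-t)|ζ|/n}`, and `|Z_{n,t}(l)| ≤ e^{|ζ|}`. The two Fourier-type sums over `2t+1`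
terms each cost a factor `2t+1`, one of which is cancelled by the normalisation of `E_{n,t}`.
In the prefactor the Gaussian factor is at most `1`, `|sinh(ζ/n)| ≤ 2|ζ|/n` since `|ζ/n| ≤ 1`,
and `binom(n,t) n^{-t} ≤ 1/t!`. Summability is that of `(2t+1) x^t / t!`, dominated by
`3 (2x)^t / t!`.
-/

lemma mul_cos_sq_add_mul_sin_sq_le {a b M : ℝ} (ha : a ≤ M) (hb : b ≤ M) (β : ℝ) :
    a * cos β ^ 2 + b * sin β ^ 2 ≤ M := by
  calc a * cos β ^ 2 + b * sin β ^ 2 ≤ M * cos β ^ 2 + M * sin β ^ 2 := by gcongr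
    _ = M := by rw [← mul_add, cos_sq_add_sin_sq, mul_one]

lemma norm_sum_choose_mul_pow_le (m : ℕ) (x y u v : ℝ) (f : ℕ → ℂ) (hf : ∀ τ, ‖f τ‖ ≤ 1) :
    ‖∑ τ ∈ Finset.range (m + 1), (m.choose τ : ℂ) * (x : ℂ) ^ τ * (y : ℂ) ^ (m - τ) *
        (u : ℂ) ^ τ * (v : ℂ) ^ (m - τ) * f τ‖ ≤ (|x * u| + |y * v|) ^ m := by
  rw [add_pow]
  refine norm_sum_le_of_le _ fun τ _ => ?_
  simp only [norm_mul, norm_pow, Complex.norm_natCast, Complex.norm_real, Real.norm_eq_abs, abs_mul]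
  have hfτ := hf τ
  calc _ ≤ (m.choose τ : ℝ) * |x| ^ τ * |y| ^ (m - τ) * |u| ^ τ * |v| ^ (m - τ) * 1 := by gcongr
    _ = _ := by ring

lemma norm_sum_Icc_neg_le {t : ℕ} {g : ℤ → ℂ} {B : ℝ} (hg : ∀ l, ‖g l‖ ≤ B) :
    ‖∑ l ∈ Finset.Icc (-(t : ℤ)) t, g l‖ ≤ (2 * t + 1) * B := by
  refine (norm_sum_le_of_le _ fun l _ => hg l).trans_eq ?_
  rw [Finset.sum_const, Int.card_Icc, nsmul_eq_mul,
    show ((t : ℤ) + 1 - -(t : ℤ)).toNat = 2 * t + 1 by omega]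
  push_cast
  ring

lemma abs_sinh_le_two_mul_abs {x : ℝ} (hx : |x| ≤ 1) : |sinh x| ≤ 2 * |x| := by
  have h₁ := abs_exp_sub_one_le hx
  have h₂ := abs_exp_sub_one_le (x := -x) (by rwa [abs_neg])
  rw [abs_neg] at h₂
  rw [sinh_eq, show (exp x - exp (-x)) / 2 = ((exp x - 1) - (exp (-x) - 1)) / 2 by ring, abs_div,
    abs_two]
  linarith [abs_sub (exp x - 1) (exp (-x) - 1)]

lemma Nat.choose_mul_div_pow_le (n t : ℕ) {a : ℝ} (ha : 0 ≤ a) :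
    (n.choose t : ℝ) * (a / n) ^ t ≤ a ^ t / t.factorial := by
  rcases Nat.eq_zero_or_pos n with rfl | hn
  · rcases Nat.eq_zero_or_pos t with rfl | ht
    · simp
    · rw [Nat.choose_eq_zero_of_lt ht, Nat.cast_zero, zero_mul]
      positivity
  · calc (n.choose t : ℝ) * (a / n) ^ t ≤ (n : ℝ) ^ t / t.factorial * (a / n) ^ t := by
          gcongr
          exact Nat.choose_le_pow_div t n
      _ = a ^ t / t.factorial := by
          have : (n : ℝ) ≠ 0 := by positivity
          rw [div_pow]
          field_simp

lemma summable_two_mul_add_one_mul_pow_div_factorial (x : ℝ) :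
    Summable fun t : ℕ => (2 * t + 1) * x ^ t / t.factorial := by
  refine ((Real.summable_pow_div_factorial (2 * |x|)).mul_left 3).of_norm_bounded fun t => ?_
  have h : (2 * t + 1 : ℝ) ≤ 3 * 2 ^ t := by
    have ht : (t : ℝ) + 1 ≤ 2 ^ t := by exact_mod_cast t.lt_two_pow_self
    linarith [one_le_pow₀ (M₀ := ℝ) (a := 2) (n := t) (by norm_num)]
  rw [Real.norm_eq_abs, abs_div, abs_mul, abs_pow, Nat.abs_cast, mul_pow]
  calc _ ≤ 3 * 2 ^ t * |x| ^ t / t.factorial := by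
        rw [abs_of_nonneg (by positivity : (0 : ℝ) ≤ 2 * t + 1)]
        gcongr
    _ = _ := by ring

lemma norm_ZntB_le (q n t k : ℕ) (γ β ζ δ c Λn : ℝ) (l : ℤ) (htn : t ≤ n) (hkn : k ≤ n) :
    ‖ZntB q n t k γ β ζ δ c Λn l‖ ≤ exp |ζ| := by
  set x := |ζ| / n
  set s := (k : ℝ) * sin (2 * δ) / n
  have hs : |s| ≤ 1 := by
    rw [abs_div, abs_mul, Nat.abs_cast, Nat.abs_cast]
    refine div_le_one_of_le₀ ?_ (Nat.cast_nonneg n)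
    calc (k : ℝ) * |sin (2 * δ)| ≤ k :=
          mul_le_of_le_one_right (Nat.cast_nonneg k) (abs_sin_le_one _)
      _ ≤ n := by exact_mod_cast hkn
  have hexp : ∀ u, |u| ≤ |ζ| → exp (u / n) ≤ exp x := fun u hu =>
    exp_le_exp.2 (div_le_div_of_nonneg_right (le_abs_self u |>.trans hu) (Nat.cast_nonneg n))
  set aP := exp (ζ / n) * cos β ^ 2 + exp (-ζ / n) * sin β ^ 2
  set aM := exp (-ζ / n) * cos β ^ 2 + exp (ζ / n) * sin β ^ 2
  have hweights : |aP * (1 + s)| + |aM * (1 - s)| ≤ 2 * exp x := by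
    obtain ⟨hs₁, hs₂⟩ := abs_le.1 hs
    have hP := mul_cos_sq_add_mul_sin_sq_le (hexp ζ le_rfl) (hexp (-ζ) (abs_neg ζ).le) β
    have hM := mul_cos_sq_add_mul_sin_sq_le (hexp (-ζ) (abs_neg ζ).le) (hexp ζ le_rfl) β
    rw [abs_of_nonneg (mul_nonneg (by positivity) (by linarith)),
      abs_of_nonneg (mul_nonneg (by positivity) (by linarith))]
    nlinarith
  have hphase : ∀ τ : ℕ, ‖Complex.exp (Complex.I * (Λn : ℂ) * (γ : ℂ) *
      (((((2 * τ : ℝ) - ((n : ℝ) - t) + l) ^ q - ((2 * τ : ℝ) - ((n : ℝ) - t) - l) ^ q) /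
        (n : ℝ) ^ (c * ((q : ℝ) - 1)) : ℝ) : ℂ))‖ ≤ 1 := fun τ => by
    rw [mul_assoc, mul_assoc, ← Complex.ofReal_mul, ← Complex.ofReal_mul,
      Complex.norm_exp_I_mul_ofReal]
  have hsum := norm_sum_choose_mul_pow_le (n - t) aP aM (1 + s) (1 - s) _ hphase
  rw [ZntB, norm_mul]
  refine (mul_le_mul_of_nonneg_left (hsum.trans (pow_le_pow_left₀ (by positivity) hweights _))
    (norm_nonneg _)).trans ?_
  rw [norm_zpow, Complex.norm_ofNat, show (t : ℤ) - n = -((n - t : ℕ) : ℤ) by omega, zpow_neg,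
    zpow_natCast, mul_pow, inv_mul_cancel_left₀ (by positivity), ← exp_nat_mul]
  refine exp_le_exp.2 ?_
  rw [← mul_div_assoc, mul_comm, mul_div_assoc]
  exact mul_le_of_le_one_right (abs_nonneg ζ)
    (div_le_one_of_le₀ (by exact_mod_cast Nat.sub_le n t) (Nat.cast_nonneg n))

lemma norm_ZhatB_le (q n t k : ℕ) (γ β ζ δ c Λn : ℝ) (ξ : ℤ) (htn : t ≤ n) (hkn : k ≤ n) :
    ‖ZhatB q n t k γ β ζ δ c Λn ξ‖ ≤ (2 * t + 1) * exp |ζ| := by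
  refine norm_sum_Icc_neg_le fun l => ?_
  rw [norm_mul, show -(2 * (π : ℂ) * Complex.I * ξ * l) / (2 * t + 1) =
      ((-(2 * π * ξ * l) / (2 * t + 1) : ℝ) : ℂ) * Complex.I by push_cast; ring,
    Complex.norm_exp_ofReal_mul_I, one_mul]
  exact norm_ZntB_le q n t k γ β ζ δ c Λn l htn hkn

lemma norm_EntB_le (q n t k : ℕ) (γ β ζ δ c Λn : ℝ) (htn : t ≤ n) (hkn : k ≤ n) :
    ‖EntB q n t k γ β ζ δ c Λn‖ ≤ (2 * t + 1) * exp |ζ| := by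
  rw [EntB, norm_mul, norm_inv, show 2 * (t : ℂ) + 1 = ((2 * t + 1 : ℝ) : ℂ) by push_cast; ring,
    Complex.norm_real, Real.norm_of_nonneg (by positivity), inv_mul_le_iff₀ (by positivity)]
  refine norm_sum_Icc_neg_le fun ξ => ?_
  rw [norm_mul, norm_pow, Complex.norm_real, Real.norm_eq_abs]
  have hsin : |sin (2 * π * ξ / (2 * t + 1))| ^ t ≤ 1 :=
    pow_le_one₀ (abs_nonneg _) (abs_sin_le_one _)
  exact (mul_le_of_le_one_left (norm_nonneg _) hsin).trans
    (norm_ZhatB_le q n t k γ β ζ δ c Λn ξ htn hkn)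

lemma abs_one_sub_add_mul_cos_le {u : ℝ} (hu₀ : 0 ≤ u) (hu₁ : u ≤ 1) (θ : ℝ) :
    |1 - u + u * cos θ| ≤ 1 := by
  rw [abs_le]
  constructor <;> nlinarith [neg_one_le_cos θ, cos_le_one θ]

lemma norm_IntB_le (q n t k : ℕ) (γ β ζ δ c Λn : ℝ) (htn : t ≤ n) (hkn : k ≤ n)
    (hζ : |ζ| ≤ n) :
    ‖IntB q n t k γ β ζ δ c Λn‖ ≤ (2 * |ζ|) ^ t * (2 * t + 1) * exp |ζ| / t.factorial := by
  have hpow : ((n : ℝ) - 2 * t) ^ q ≤ (n : ℝ) ^ q := by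
    have : (t : ℝ) ≤ n := by exact_mod_cast htn
    refine (le_abs_self _).trans ?_
    rw [abs_pow]
    exact pow_le_pow_left₀ (abs_nonneg _)
      (abs_le.2 ⟨by linarith, by linarith [t.cast_nonneg (α := ℝ)]⟩) q
  have hgauss : exp (-(γ ^ 2 * ((n : ℝ) ^ q - ((n : ℝ) - 2 * t) ^ q) / (n : ℝ) ^ (q - 1))) ≤ 1 :=
    exp_le_one_iff.2 <| neg_nonpos.2 <|
      div_nonneg (mul_nonneg (sq_nonneg γ) (sub_nonneg.2 hpow)) (by positivity)
  have hk : (k : ℝ) / n ≤ 1 := div_le_one_of_le₀ (by exact_mod_cast hkn) (Nat.cast_nonneg n)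
  have hweight : |sinh (ζ / n) * sin (2 * β) * (1 - (k : ℝ) / n + (k : ℝ) * cos (2 * δ) / n)|
      ≤ 2 * |ζ| / n := by
    have hsinh : |sinh (ζ / n)| ≤ 2 * |ζ / n| := abs_sinh_le_two_mul_abs <| by
      rw [abs_div, Nat.abs_cast]
      exact div_le_one_of_le₀ hζ (Nat.cast_nonneg n)
    rw [abs_mul, abs_mul, mul_div_right_comm (k : ℝ)]
    calc _ ≤ 2 * |ζ / n| * 1 * 1 := by
          gcongr
          · exact abs_sin_le_one _
          · exact abs_one_sub_add_mul_cos_le (by positivity) hk _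
      _ = 2 * |ζ| / n := by rw [abs_div, Nat.abs_cast]; ring
  rw [IntB, norm_mul, norm_mul, norm_mul, norm_pow, Complex.norm_natCast, Complex.norm_real,
    Complex.norm_real, Real.norm_eq_abs, Real.norm_eq_abs, abs_of_pos (exp_pos _)]
  calc _ ≤ (n.choose t : ℝ) * 1 * (2 * |ζ| / n) ^ t * ((2 * t + 1) * exp |ζ|) := by
        gcongr
        exact norm_EntB_le q n t k γ β ζ δ c Λn htn hkn
    _ = (n.choose t : ℝ) * (2 * |ζ| / n) ^ t * ((2 * t + 1) * exp |ζ|) := by ring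
    _ ≤ (2 * |ζ|) ^ t / t.factorial * ((2 * t + 1) * exp |ζ|) := by
        gcongr
        exact Nat.choose_mul_div_pow_le n t (by positivity)
    _ = _ := by ring

theorem IntB_summable_bound_general
    (q : ℕ) (γ β ζ δ c : ℝ) :
    (∀ (Λn : ℝ), 0 ≤ Λn → ∀ n t k : ℕ, t ≤ n → k ≤ n → |ζ| ≤ n →
        ‖IntB q n t k γ β ζ δ c Λn‖ ≤
          (18 * |ζ|) ^ t * (2 * t + 1) * Real.exp |ζ| / t.factorial) ∧
      Summable (fun t : ℕ => (18 * |ζ|) ^ t * (2 * t + 1) * Real.exp |ζ| / t.factorial) := by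
  refine ⟨fun Λn _ n t k htn hkn hζ => (norm_IntB_le q n t k γ β ζ δ c Λn htn hkn hζ).trans ?_, ?_⟩
  · gcongr
    linarith [abs_nonneg ζ]
  · refine ((summable_two_mul_add_one_mul_pow_div_factorial (18 * |ζ|)).mul_right (exp |ζ|)).congr
      fun t => ?_
    ring

/-- **Lemma (summable bound on the biased `I_{n,t}`)**: for `0 ≤ t ≤ n`, `0 ≤ k ≤ n` and
`|ζ| ≤ n`, `|I_{n,t}| ≤ s_t := (18|ζ|)^t (2t+1) e^{|ζ|} / t!`, and `∑_t s_t < ∞`. -/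
theorem IntB_summable_bound
    (q : ℕ) (hq : 2 ≤ q) (γ β ζ δ c : ℝ)
    (hδ : δ ∈ Set.Icc (0 : ℝ) (π / 4)) (hc : 1 / 2 < c ∧ c < 1) :
    (∀ (Λn : ℝ), 0 ≤ Λn → ∀ n t k : ℕ, t ≤ n → k ≤ n → |ζ| ≤ n →
        ‖IntB q n t k γ β ζ δ c Λn‖ ≤
          (18 * |ζ|) ^ t * (2 * t + 1) * Real.exp |ζ| / t.factorial) ∧
      Summable (fun t : ℕ => (18 * |ζ|) ^ t * (2 * t + 1) * Real.exp |ζ| / t.factorial) :=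
  IntB_summable_bound_general q γ β ζ δ c

end
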